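/- arXiv:0811.3706 — 5 statements merged into one kernel-verified Lean document; each statement's English description precedes it below -/
import Mathlib

section
/- For every n ∈ ℤ and every configuration η ∈ ℝ^ℤ, the multiset of three configurations {τ_n σ_{n+1} σ_n η, σ_n τ_{n+1} σ_n η, σ_n σ_{n+1} τ_n η} is equal to the multiset {τ_{n+1} σ_n σ_{n+1} η, σ_{n+1} τ_n σ_{n+1} η, σ_{n+1} σ_n τ_{n+1} η} (products read right to left). Equivalently, the sum of the three Dirac masses at the first three configurations equals the sum of the three Dirac masses at the last three. -/
/-- The transposition operator `τ_n` on configurations `η : ℤ → ℝ`: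
exchanges coordinates `n` and `n+1`, leaving all other coordinates unchanged. -/
def tauOp (n : ℤ) (η : ℤ → ℝ) : ℤ → ℝ :=
  fun k => if k = n then η (n + 1) else if k = n + 1 then η n else η k

/-- The sorting operator `σ_n` on configurations `η : ℤ → ℝ`:
sorts coordinates `n` and `n+1` into decreasing order. -/
def sigmaOp (n : ℤ) (η : ℤ → ℝ) : ℤ → ℝ :=
  fun k => if k = n then max (η n) (η (n + 1))
    else if k = n + 1 then min (η n) (η (n + 1)) else η k

/-!
All six operators only touch the coordinates `n, n+1, n+2`, and act there through
the transpositions and sorting maps of a triple of values. So the identity reduces to one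
between multisets of triples in a linear order, which is checked for each relative order
of the three values.
-/

namespace Triple

variable {α : Type*}

def swap₁₂ (p : α × α × α) : α × α × α := (p.2.1, p.1, p.2.2)

def swap₂₃ (p : α × α × α) : α × α × α := (p.1, p.2.2, p.2.1)

variable [LinearOrder α]

def sort₁₂ (p : α × α × α) : α × α × α := (max p.1 p.2.1, min p.1 p.2.1, p.2.2)

def sort₂₃ (p : α × α × α) : α × α × α := (p.1, max p.2.1 p.2.2, min p.2.1 p.2.2)

theorem mixed_multiset_eq (p : α × α × α) :
    ({swap₁₂ (sort₂₃ (sort₁₂ p)), sort₁₂ (swap₂₃ (sort₁₂ p)), sort₁₂ (sort₂₃ (swap₁₂ p))} :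
      Multiset (α × α × α)) =
    {swap₂₃ (sort₁₂ (sort₂₃ p)), sort₂₃ (swap₁₂ (sort₂₃ p)), sort₂₃ (sort₁₂ (swap₂₃ p))} := by
  obtain ⟨a, b, c⟩ := p
  simp only [swap₁₂, swap₂₃, sort₁₂, sort₂₃]
  -- the two cyclic orderings left open by `simp` force `a = b = c`
  rcases le_total a b with hab | hab <;> rcases le_total b c with hbc | hbc <;>
    rcases le_total a c with hac | hac <;>
    simp only [hab, hbc, hac, max_eq_left, max_eq_right, min_eq_left, min_eq_right,
      Multiset.insert_eq_cons, ← Multiset.cons_zero, Multiset.cons_swap, Multiset.cons_inj_left,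
      Multiset.cons_inj_right, Prod.mk.injEq] <;>
    exact ⟨by order, by order, by order⟩

end Triple

def withTriple {β : Type*} (n : ℤ) (η : ℤ → β) (p : β × β × β) : ℤ → β :=
  fun k => if k = n then p.1 else if k = n + 1 then p.2.1 else if k = n + 1 + 1 then p.2.2
    else η k

theorem withTriple_self {β : Type*} (n : ℤ) (η : ℤ → β) :
    withTriple n η (η n, η (n + 1), η (n + 1 + 1)) = η := by
  funext k
  simp only [withTriple]
  split_ifs <;> simp_all

section withTriple

variable (n : ℤ) (η : ℤ → ℝ) (p : ℝ × ℝ × ℝ)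

theorem tauOp_withTriple : tauOp n (withTriple n η p) = withTriple n η (Triple.swap₁₂ p) := by
  funext k
  simp only [tauOp, withTriple, Triple.swap₁₂]
  split_ifs <;> first | rfl | omega

theorem tauOp_succ_withTriple :
    tauOp (n + 1) (withTriple n η p) = withTriple n η (Triple.swap₂₃ p) := by
  funext k
  simp only [tauOp, withTriple, Triple.swap₂₃]
  split_ifs <;> first | rfl | omega

theorem sigmaOp_withTriple :
    sigmaOp n (withTriple n η p) = withTriple n η (Triple.sort₁₂ p) := by
  funext k
  simp only [sigmaOp, withTriple, Triple.sort₁₂]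
  split_ifs <;> first | rfl | omega

theorem sigmaOp_succ_withTriple :
    sigmaOp (n + 1) (withTriple n η p) = withTriple n η (Triple.sort₂₃ p) := by
  funext k
  simp only [sigmaOp, withTriple, Triple.sort₂₃]
  split_ifs <;> first | rfl | omega

end withTriple

/-- The multiset of configurations
`{τ_n σ_{n+1} σ_n η, σ_n τ_{n+1} σ_n η, σ_n σ_{n+1} τ_n η}` equals the multiset
`{τ_{n+1} σ_n σ_{n+1} η, σ_{n+1} τ_n σ_{n+1} η, σ_{n+1} σ_n τ_{n+1} η}`
(products read right to left). -/
theorem mixed_triple_multiset_eq (n : ℤ) (η : ℤ → ℝ) :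
    ({tauOp n (sigmaOp (n + 1) (sigmaOp n η)),
      sigmaOp n (tauOp (n + 1) (sigmaOp n η)),
      sigmaOp n (sigmaOp (n + 1) (tauOp n η))} : Multiset (ℤ → ℝ)) =
    ({tauOp (n + 1) (sigmaOp n (sigmaOp (n + 1) η)),
      sigmaOp (n + 1) (tauOp n (sigmaOp (n + 1) η)),
      sigmaOp (n + 1) (sigmaOp n (tauOp (n + 1) η))} : Multiset (ℤ → ℝ)) := by
  rw [← withTriple_self n η]
  simp only [tauOp_withTriple, tauOp_succ_withTriple, sigmaOp_withTriple,
    sigmaOp_succ_withTriple]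
  simpa only [Multiset.insert_eq_cons, Multiset.map_cons, Multiset.map_singleton] using
    congrArg (Multiset.map (withTriple n η)) (Triple.mixed_multiset_eq _)
end

section
/- For every q ∈ [0,1], every finite Borel measure ν on ℝ^ℤ and every n ∈ ℤ, the Markov operators π_n satisfy the braid relation: π_n(π_{n+1}(π_n ν)) = π_{n+1}(π_n(π_{n+1} ν)). -/
/-!
Pass to the dual action on test functions, `f ↦ q · f ∘ τ_n + (1 - q) · f ∘ σ_n`, so that
`∫ f d(π_n ν) = ∫ (dual f) dν`. Since `τ_n`, `τ_{n+1}`, `σ_n`, `σ_{n+1}` only touch the three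
coordinates `n, n+1, n+2`, the braid relation for the dual operators is a pointwise identity
between two polynomials in `q, p` whose coefficients are values of `f` at rearrangements of these
three coordinates; once their relative order is fixed, both sides become the same polynomial.
-/

open MeasureTheory
open scoped NNReal ENNReal

/-- The Markov operator `π_n ν = q·(τ_n)_*ν + (1−q)·(σ_n)_*ν` on finite Borel
measures on `ℝ^ℤ` (with the product topology / Borel σ-algebra). -/
noncomputable def piOp (q : ℝ≥0) (n : ℤ) (ν : Measure (ℤ → ℝ)) : Measure (ℤ → ℝ) :=
  q • ν.map (tauOp n) + (1 - q) • ν.map (sigmaOp n)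

lemma measurable_tauOp (n : ℤ) : Measurable (tauOp n) := by
  refine measurable_pi_lambda _ fun k => ?_
  unfold tauOp
  split_ifs <;> exact measurable_pi_apply _

lemma measurable_sigmaOp (n : ℤ) : Measurable (sigmaOp n) := by
  refine measurable_pi_lambda _ fun k => ?_
  unfold sigmaOp
  split_ifs
  · exact (measurable_pi_apply _).max (measurable_pi_apply _)
  · exact (measurable_pi_apply _).min (measurable_pi_apply _)
  · exact measurable_pi_apply _

def update₃ (n : ℤ) (η : ℤ → ℝ) (x y z : ℝ) : ℤ → ℝ :=
  fun k => if k = n then x else if k = n + 1 then y else if k = n + 2 then z else η k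

section update₃

variable (n : ℤ) (η : ℤ → ℝ) (x y z : ℝ)

lemma update₃_self : update₃ n η (η n) (η (n + 1)) (η (n + 2)) = η := by
  funext k
  unfold update₃
  split_ifs <;> simp_all

lemma tauOp_update₃ : tauOp n (update₃ n η x y z) = update₃ n η y x z := by
  funext k
  simp only [tauOp, update₃]
  split_ifs <;> first | rfl | omega

lemma tauOp_succ_update₃ : tauOp (n + 1) (update₃ n η x y z) = update₃ n η x z y := by
  funext k
  simp only [tauOp, update₃]
  split_ifs <;> first | rfl | omega

lemma sigmaOp_update₃ :
    sigmaOp n (update₃ n η x y z) = update₃ n η (max x y) (min x y) z := by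
  funext k
  simp only [sigmaOp, update₃]
  split_ifs <;> first | rfl | omega

lemma sigmaOp_succ_update₃ :
    sigmaOp (n + 1) (update₃ n η x y z) = update₃ n η x (max y z) (min y z) := by
  funext k
  simp only [sigmaOp, update₃]
  split_ifs <;> first | rfl | omega

end update₃

def piDual {R : Type*} [CommSemiring R] (q p : R) (n : ℤ) (f : (ℤ → ℝ) → R) :
    (ℤ → ℝ) → R :=
  fun η => q * f (tauOp n η) + p * f (sigmaOp n η)

lemma piDual_braid {R : Type*} [CommSemiring R] (q p : R) (n : ℤ) (f : (ℤ → ℝ) → R)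
    (η : ℤ → ℝ) :
    piDual q p n (piDual q p (n + 1) (piDual q p n f)) η =
      piDual q p (n + 1) (piDual q p n (piDual q p (n + 1) f)) η := by
  rw [← update₃_self n η]
  simp only [piDual, tauOp_update₃, tauOp_succ_update₃, sigmaOp_update₃, sigmaOp_succ_update₃]
  generalize η n = a, η (n + 1) = b, η (n + 2) = c
  -- in the two cyclic cases `a ≤ b ≤ c ≤ a` and `c ≤ b ≤ a ≤ c` all three values coincide
  rcases le_total a b with hab | hab <;> rcases le_total b c with hbc | hbc <;>
    rcases le_total a c with hac | hac <;>
    simp only [max_eq_left, max_eq_right, min_eq_left, min_eq_right, hab, hbc, hac] <;>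
    first
    | ring1
    | obtain ⟨rfl, rfl⟩ : a = b ∧ b = c := ⟨by order, by order⟩
      rfl

lemma Measurable.piDual {q p : ℝ≥0∞} (n : ℤ) {f : (ℤ → ℝ) → ℝ≥0∞} (hf : Measurable f) :
    Measurable (piDual q p n f) :=
  ((hf.comp (measurable_tauOp n)).const_mul q).add ((hf.comp (measurable_sigmaOp n)).const_mul p)

lemma lintegral_piOp (q : ℝ≥0) (n : ℤ) (ν : Measure (ℤ → ℝ)) {f : (ℤ → ℝ) → ℝ≥0∞}
    (hf : Measurable f) :
    ∫⁻ η, f η ∂(piOp q n ν) = ∫⁻ η, piDual (q : ℝ≥0∞) ((1 - q : ℝ≥0) : ℝ≥0∞) n f η ∂ν := by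
  have hfτ : Measurable fun η => f (tauOp n η) := hf.comp (measurable_tauOp n)
  have hfσ : Measurable fun η => f (sigmaOp n η) := hf.comp (measurable_sigmaOp n)
  simp only [piDual]
  rw [lintegral_add_left (hfτ.const_mul _), lintegral_const_mul _ hfτ, lintegral_const_mul _ hfσ,
    piOp, lintegral_add_measure, lintegral_smul_measure, lintegral_smul_measure,
    lintegral_map hf (measurable_tauOp n), lintegral_map hf (measurable_sigmaOp n), ENNReal.smul_def, ENNReal.smul_def, smul_eq_mul,
    smul_eq_mul]

theorem piOp_braid_general (q : ℝ≥0) (ν : Measure (ℤ → ℝ)) (n : ℤ) :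
    piOp q n (piOp q (n + 1) (piOp q n ν)) =
      piOp q (n + 1) (piOp q n (piOp q (n + 1) ν)) := by
  refine Measure.ext_of_lintegral _ fun f hf => ?_
  rw [lintegral_piOp _ _ _ hf, lintegral_piOp _ _ _ (hf.piDual n),
    lintegral_piOp _ _ _ ((hf.piDual n).piDual (n + 1)),
    lintegral_piOp _ _ _ hf, lintegral_piOp _ _ _ (hf.piDual (n + 1)),
    lintegral_piOp _ _ _ ((hf.piDual (n + 1)).piDual n)]
  exact lintegral_congr (piDual_braid _ _ n f)

/-- The braid relation for the Markov operators `π_n`: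
`π_n(π_{n+1}(π_n ν)) = π_{n+1}(π_n(π_{n+1} ν))`. -/
theorem piOp_braid (q : ℝ≥0) (hq : q ≤ 1) (ν : Measure (ℤ → ℝ))
    [IsFiniteMeasure ν] (n : ℤ) :
    piOp q n (piOp q (n + 1) (piOp q n ν)) =
      piOp q (n + 1) (piOp q n (piOp q (n + 1) ν)) :=
  piOp_braid_general q ν n
end

section
/- Let r ∈ [0, 1/2] and let (X_i)_{i≥1} be i.i.d. random variables with P(X_i = 1) = P(X_i = −1) = r and P(X_i = 0) = 1 − 2r; set S_0 = 0, S_n = X_1 + ⋯ + X_n and M_n = max_{0 ≤ i ≤ n} S_i. Then for every n, P(M_n = 0) = P(S_n ∈ {0, −1}); equivalently, the probability that all the partial sums S_1, …, S_n are ≤ 0 equals P(S_n = 0) + P(S_n = −1). -/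
/-!
Reflection principle. Let `τ` be the first time the walk reaches level `1`. As the steps are
at most `1`, the maximum is `0` exactly when `τ > n`, and every path with `S_n ≥ 2` reaches `1`.
Flipping the signs of the steps after `τ` is an involution of the path space which preserves
the law of the steps (each step is symmetric) and turns `S_n` into `2 - S_n`. Hence
`P(τ ≤ n, S_n ≤ 0) = P(S_n ≥ 2) = P(S_n ≤ -2)`, and subtracting this from
`P(S_n ≤ 0) = P(M_n = 0) + P(τ ≤ n, S_n ≤ 0)` leaves `P(S_n = 0) + P(S_n = -1)`.
-/

open MeasureTheory ProbabilityTheory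
open scoped ENNReal

lemma Finset.sup'_range_succ_eq_iff {α : Type*} [SemilatticeSup α] {f : ℕ → α} {a : α}
    (hf : f 0 = a) (n : ℕ) (h : (Finset.range (n + 1)).Nonempty) :
    (Finset.range (n + 1)).sup' h f = a ↔ ∀ j ≤ n, f j ≤ a := by
  have h0 : a ≤ (Finset.range (n + 1)).sup' h f := by
    rw [← hf]
    exact Finset.le_sup' f (Finset.mem_range.2 n.succ_pos)
  rw [← h0.ge_iff_eq', Finset.sup'_le_iff]
  simp only [Finset.mem_range, Nat.lt_succ_iff]

lemma measure_preimage_equiv_of_singleton {α : Type*} [MeasurableSpace α] [Countable α]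
    [MeasurableSingletonClass α] {μ : Measure α} (e : α ≃ α) (he : ∀ x, μ {e x} = μ {x})
    (s : Set α) : μ (e ⁻¹' s) = μ s := by
  have hmap : μ.map e = μ := Measure.ext_of_singleton fun a => by
    rw [Measure.map_apply (measurable_of_countable e) (measurableSet_singleton a),
      ← Equiv.image_symm_eq_preimage, Set.image_singleton, ← he, Equiv.apply_symm_apply]
  rw [← Measure.map_apply (measurable_of_countable e) (.of_discrete), hmap]

namespace LazyWalk

variable {n : ℕ}

def partialSum (x : Fin n → ℤ) (j : ℕ) : ℤ :=
  ∑ i : Fin n, if (i : ℕ) < j then x i else 0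

@[simp]
lemma partialSum_zero (x : Fin n → ℤ) : partialSum x 0 = 0 := by
  simp [partialSum]

lemma partialSum_of_le (x : Fin n → ℤ) {j : ℕ} (hj : n ≤ j) :
    partialSum x j = partialSum x n :=
  Finset.sum_congr rfl fun i _ => by simp [i.isLt, i.isLt.trans_le hj]

lemma partialSum_succ (x : Fin n → ℤ) {j : ℕ} (hj : j < n) :
    partialSum x (j + 1) = partialSum x j + x ⟨j, hj⟩ := by
  have hlast : x ⟨j, hj⟩ = ∑ i : Fin n, if i = ⟨j, hj⟩ then x i else 0 := by simp
  rw [partialSum, partialSum, hlast, ← Finset.sum_add_distrib]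
  refine Finset.sum_congr rfl fun i _ => ?_
  rcases eq_or_ne i ⟨j, hj⟩ with rfl | h
  · simp
  · have : (i : ℕ) ≠ j := fun h' => h (Fin.ext h')
    simp only [if_neg h]
    split_ifs <;> omega

lemma partialSum_neg (x : Fin n → ℤ) (j : ℕ) : partialSum (-x) j = -partialSum x j := by
  simp only [partialSum, ← Finset.sum_neg_distrib, Pi.neg_apply, apply_ite Neg.neg, neg_zero]

lemma partialSum_eq_sum_range (x : ℕ → ℤ) {j : ℕ} (hj : j ≤ n) :
    partialSum (fun i : Fin n => x i) j = ∑ i ∈ Finset.range j, x i := by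
  have hrange : (Finset.range n).filter (· < j) = Finset.range j := by
    ext i
    simp only [Finset.mem_filter, Finset.mem_range]
    omega
  rw [partialSum, Fin.sum_univ_eq_sum_range (fun i => if i < j then x i else 0),
    ← Finset.sum_filter, hrange]

lemma partialSum_succ_le {x : Fin n → ℤ} (hx : ∀ i, x i ≤ 1) (j : ℕ) :
    partialSum x (j + 1) ≤ partialSum x j + 1 := by
  rcases lt_or_ge j n with hj | hj
  · simpa [partialSum_succ x hj] using hx ⟨j, hj⟩
  · rw [partialSum_of_le x hj, partialSum_of_le x (by omega)]
    omega

def HitsOne (x : Fin n → ℤ) : Prop := ∃ j, partialSum x j = 1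

lemma HitsOne.exists_le_pos {x : Fin n → ℤ} (h : HitsOne x) :
    ∃ j ≤ n, 0 < partialSum x j := by
  obtain ⟨j, hj⟩ := h
  rcases le_or_gt j n with hjn | hjn
  · exact ⟨j, hjn, by omega⟩
  · exact ⟨n, le_rfl, by rw [← partialSum_of_le x hjn.le]; omega⟩

lemma hitsOne_of_pos {x : Fin n → ℤ} (hx : ∀ i, x i ≤ 1) {j : ℕ}
    (hj : 0 < partialSum x j) : HitsOne x := by
  induction j with
  | zero => simp at hj
  | succ j ih =>
    by_cases h : 0 < partialSum x j
    · exact ih h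
    · exact ⟨j + 1, by have := partialSum_succ_le hx j; omega⟩

open scoped Classical in
noncomputable def reflect (x : Fin n → ℤ) : Fin n → ℤ :=
  if hx : HitsOne x then fun i : Fin n => if (i : ℕ) < Nat.find hx then x i else -x i else x

open scoped Classical in
lemma reflect_of_hitsOne {x : Fin n → ℤ} (hx : HitsOne x) :
    reflect x = fun i : Fin n => if (i : ℕ) < Nat.find hx then x i else -x i :=
  dif_pos hx

lemma reflect_of_not_hitsOne {x : Fin n → ℤ} (hx : ¬HitsOne x) : reflect x = x :=
  dif_neg hx

lemma abs_reflect_apply (x : Fin n → ℤ) (i : Fin n) : |reflect x i| = |x i| := by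
  classical
  by_cases hx : HitsOne x
  · rw [reflect_of_hitsOne hx]
    dsimp only
    split_ifs <;> simp
  · rw [reflect_of_not_hitsOne hx]

open scoped Classical in
lemma partialSum_reflect {x : Fin n → ℤ} (hx : HitsOne x) (j : ℕ) :
    partialSum (reflect x) j = 2 * partialSum x (min j (Nat.find hx)) - partialSum x j := by
  rw [reflect_of_hitsOne hx, partialSum, partialSum, partialSum, Finset.mul_sum,
    ← Finset.sum_sub_distrib]
  refine Finset.sum_congr rfl fun i _ => ?_
  split_ifs <;> omega

open scoped Classical in
lemma find_reflect {x : Fin n → ℤ} (hx : HitsOne x) :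
    ∃ hy : HitsOne (reflect x), Nat.find hy = Nat.find hx := by
  have hτ : partialSum (reflect x) (Nat.find hx) = 1 := by
    rw [partialSum_reflect hx, min_self, Nat.find_spec hx]
    norm_num
  refine ⟨⟨_, hτ⟩, (Nat.find_eq_iff _).2 ⟨hτ, fun j hj => ?_⟩⟩
  rw [partialSum_reflect hx, min_eq_left hj.le]
  have := Nat.find_min hx hj
  omega

lemma hitsOne_reflect_iff {x : Fin n → ℤ} : HitsOne (reflect x) ↔ HitsOne x := by
  by_cases hx : HitsOne x
  · exact iff_of_true (find_reflect hx).1 hx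
  · rw [reflect_of_not_hitsOne hx]

lemma reflect_involutive : Function.Involutive (reflect (n := n)) := by
  classical
  intro x
  by_cases hx : HitsOne x
  · obtain ⟨hy, hτ⟩ := find_reflect hx
    rw [reflect_of_hitsOne hy, hτ, reflect_of_hitsOne hx]
    funext i
    by_cases hi : (i : ℕ) < Nat.find hx <;> simp [hi]
  · rw [reflect_of_not_hitsOne hx, reflect_of_not_hitsOne hx]

lemma partialSum_reflect_last {x : Fin n → ℤ} (hx : HitsOne x) :
    partialSum (reflect x) n = 2 - partialSum x n := by
  classical
  have hτ : Nat.find hx ≤ n := by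
    by_contra! h
    exact Nat.find_min hx h (by rw [← partialSum_of_le x h.le]; exact Nat.find_spec hx)
  rw [partialSum_reflect hx, min_eq_right hτ, Nat.find_spec hx]
  ring

lemma reflect_preimage :
    reflect ⁻¹' {x : Fin n → ℤ | HitsOne x ∧ partialSum x n ≤ 0}
      = {x | HitsOne x ∧ 2 ≤ partialSum x n} := by
  ext x
  by_cases hx : HitsOne x
  · have := partialSum_reflect_last hx
    simp only [Set.mem_preimage, Set.mem_ofPred, hitsOne_reflect_iff, hx, true_and]
    omega
  · simp [reflect_of_not_hitsOne hx, hx]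

theorem measure_forall_partialSum_nonpos {ν : Measure (Fin n → ℤ)} [IsFiniteMeasure ν]
    (hsymm : ∀ x y : Fin n → ℤ, (∀ i, |x i| = |y i|) → ν {x} = ν {y})
    (hskip : ∀ᵐ x ∂ν, ∀ i, x i ≤ 1) :
    ν {x | ∀ j ≤ n, partialSum x j ≤ 0}
      = ν {x | partialSum x n = 0} + ν {x | partialSum x n = -1} := by
  set A := {x : Fin n → ℤ | ∀ j ≤ n, partialSum x j ≤ 0}
  have h_nonpos :
      ν A + ν {x | HitsOne x ∧ partialSum x n ≤ 0} = ν {x | partialSum x n ≤ 0} := by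
    rw [← measure_union _ (.of_discrete)]
    · refine measure_congr <| Filter.eventuallyEq_set.2 <|
        hskip.mono fun x hx => ⟨?_, fun h => ?_⟩
      · rintro (h | ⟨-, h⟩)
        exacts [h n le_rfl, h]
      · by_contra hA
        simp only [Set.mem_union, Set.mem_ofPred, A, not_or, not_forall, not_le] at hA
        obtain ⟨⟨j, -, hj⟩, hH⟩ := hA
        exact hH ⟨hitsOne_of_pos hx hj, h⟩
    · refine Set.disjoint_left.2 fun x hA ⟨hH, _⟩ => ?_
      obtain ⟨j, hj, hpos⟩ := hH.exists_le_pos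
      exact (hA j hj).not_gt hpos
  have h_reflect : ν {x | HitsOne x ∧ partialSum x n ≤ 0} = ν {x | 2 ≤ partialSum x n} := by
    rw [← measure_preimage_equiv_of_singleton reflect_involutive.toPerm
      (fun x => hsymm _ _ (abs_reflect_apply x)), Function.Involutive.coe_toPerm, reflect_preimage]
    refine measure_congr (Filter.eventuallyEq_set.2 (hskip.mono fun x hx => ?_))
    exact and_iff_right_of_imp fun h => hitsOne_of_pos hx (j := n) (by omega)
  have h_neg : ν {x | 2 ≤ partialSum x n} = ν {x | partialSum x n ≤ -2} := by
    rw [← measure_preimage_equiv_of_singleton (Equiv.neg _)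
      (fun x => hsymm _ _ fun i => abs_neg _)]
    congr 1
    ext x
    simp only [Set.mem_preimage, Equiv.neg_apply, Set.mem_ofPred, partialSum_neg]
    omega
  have h_split : ν {x | partialSum x n ≤ 0}
      = ν {x | partialSum x n = 0} + ν {x | partialSum x n = -1}
        + ν {x | partialSum x n ≤ -2} := by
    rw [← measure_union _ (.of_discrete), ← measure_union _ (.of_discrete)]
    · congr 1
      ext x
      simp only [Set.mem_union, Set.mem_ofPred]
      omega
    all_goals
      refine Set.disjoint_left.2 fun x h1 h2 => ?_
      simp only [Set.mem_union, Set.mem_ofPred] at h1 h2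
      omega
  rw [h_reflect, h_neg, h_split] at h_nonpos
  exact (ENNReal.add_left_inj (measure_ne_top _ _)).1 h_nonpos

section Steps

variable {Ω : Type*} [MeasureSpace Ω]

lemma ae_mem_of_lazy_step [IsProbabilityMeasure (ℙ : Measure Ω)] {Y : Ω → ℤ}
    (hY : Measurable Y) {r : ℝ} (hr : 0 ≤ r ∧ r ≤ 1 / 2)
    (hp1 : ℙ {ω | Y ω = 1} = ENNReal.ofReal r) (hm1 : ℙ {ω | Y ω = -1} = ENNReal.ofReal r)
    (h0 : ℙ {ω | Y ω = 0} = ENNReal.ofReal (1 - 2 * r)) :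
    ∀ᵐ ω, Y ω ∈ ({-1, 0, 1} : Finset ℤ) := by
  have hsum : ℙ (Y ⁻¹' ↑({-1, 0, 1} : Finset ℤ)) = 1 := by
    rw [← sum_measure_preimage_singleton _ fun _ _ => hY (measurableSet_singleton _),
      Finset.sum_insert (by decide), Finset.sum_insert (by decide), Finset.sum_singleton]
    change ℙ {ω | Y ω = -1} + (ℙ {ω | Y ω = 0} + ℙ {ω | Y ω = 1}) = 1
    rw [hm1, h0, hp1, ← ENNReal.ofReal_add (by linarith) hr.1,
      ← ENNReal.ofReal_add hr.1 (by linarith), show r + (1 - 2 * r + r) = 1 by ring,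
      ENNReal.ofReal_one]
  exact (ae_mem_iff_measure_eq (hY (Finset.measurableSet _)).nullMeasurableSet).2
    (by rw [hsum, measure_univ])

lemma measure_eq_of_abs_eq_of_lazy_step [IsProbabilityMeasure (ℙ : Measure Ω)] {Y : Ω → ℤ}
    (hY : Measurable Y) {r : ℝ} (hr : 0 ≤ r ∧ r ≤ 1 / 2)
    (hp1 : ℙ {ω | Y ω = 1} = ENNReal.ofReal r) (hm1 : ℙ {ω | Y ω = -1} = ENNReal.ofReal r)
    (h0 : ℙ {ω | Y ω = 0} = ENNReal.ofReal (1 - 2 * r)) {k l : ℤ} (hkl : |k| = |l|) :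
    ℙ {ω | Y ω = k} = ℙ {ω | Y ω = l} := by
  have hnull : ∀ m ∉ ({-1, 0, 1} : Finset ℤ), ℙ {ω | Y ω = m} = 0 := fun m hm =>
    measure_mono_null (fun ω (h : Y ω = m) => show Y ω ∉ _ by rwa [h])
      (ae_iff.1 (ae_mem_of_lazy_step hY hr hp1 hm1 h0))
  rcases abs_eq_abs.1 hkl with rfl | rfl
  · rfl
  by_cases hl : l ∈ ({-1, 0, 1} : Finset ℤ)
  · simp only [Finset.mem_insert, Finset.mem_singleton] at hl
    rcases hl with rfl | rfl | rfl
    · rw [neg_neg, hp1, hm1]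
    · rw [neg_zero]
    · rw [hp1, hm1]
  · have hl' : -l ∉ ({-1, 0, 1} : Finset ℤ) := by
      simp only [Finset.mem_insert, Finset.mem_singleton] at hl ⊢
      omega
    rw [hnull l hl, hnull (-l) hl']

lemma measure_map_steps_singleton {X : ℕ → Ω → ℤ} (hmeas : ∀ i, Measurable (X i))
    (hindep : iIndepFun X ℙ) (x : Fin n → ℤ) :
    (ℙ : Measure Ω).map (fun ω (i : Fin n) => X i ω) {x}
      = ∏ i : Fin n, ℙ {ω | X i ω = x i} := by
  rw [Measure.map_apply (measurable_pi_lambda _ fun i : Fin n => hmeas i)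
    (measurableSet_singleton x)]
  have : (fun ω (i : Fin n) => X i ω) ⁻¹' {x} = ⋂ i : Fin n, X i ⁻¹' {x i} := by
    ext ω
    simp [funext_iff]
  rw [this, (hindep.precomp Fin.val_injective).meas_iInter fun i =>
    ⟨{x i}, measurableSet_singleton _, rfl⟩]
  rfl

end Steps

end LazyWalk

/-- For the lazy symmetric random walk `S` with i.i.d. steps taking values
`±1` with probability `r` each and `0` with probability `1 − 2r`, with running
maximum `M_n = max_{0 ≤ i ≤ n} S_i`, one has
`P(M_n = 0) = P(S_n = 0) + P(S_n = −1)`. -/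
theorem lazy_walk_max_eq_zero
    (Ω : Type*) [MeasureSpace Ω] [IsProbabilityMeasure (ℙ : Measure Ω)]
    (r : ℝ) (hr : 0 ≤ r ∧ r ≤ 1 / 2)
    (X : ℕ → Ω → ℤ) (hmeas : ∀ i, Measurable (X i))
    (hindep : iIndepFun X ℙ)
    (hp1 : ∀ i, ℙ {ω | X i ω = 1} = ENNReal.ofReal r)
    (hm1 : ∀ i, ℙ {ω | X i ω = -1} = ENNReal.ofReal r)
    (h0 : ∀ i, ℙ {ω | X i ω = 0} = ENNReal.ofReal (1 - 2 * r))
    (S : ℕ → Ω → ℤ) (hS : ∀ n ω, S n ω = ∑ i ∈ Finset.range n, X i ω)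
    (M : ℕ → Ω → ℤ)
    (hM : ∀ n ω, M n ω = (Finset.range (n + 1)).sup'
      (Finset.nonempty_range_iff.mpr (Nat.succ_ne_zero n)) (fun i => S i ω))
    (n : ℕ) :
    ℙ {ω | M n ω = 0} = ℙ {ω | S n ω = 0} + ℙ {ω | S n ω = -1} := by
  set steps : Ω → Fin n → ℤ := fun ω i => X i ω
  have hsteps : Measurable steps := measurable_pi_lambda _ fun i => hmeas i
  have hlaw (s : Set (Fin n → ℤ)) : ℙ (steps ⁻¹' s) = (ℙ : Measure Ω).map steps s :=
    (Measure.map_apply hsteps (.of_discrete)).symm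
  have hS_steps (j : ℕ) (hj : j ≤ n) (ω : Ω) : S j ω = LazyWalk.partialSum (steps ω) j := by
    rw [hS, LazyWalk.partialSum_eq_sum_range (X · ω) hj]
  have hM0 : {ω | M n ω = 0} = steps ⁻¹' {x | ∀ j ≤ n, LazyWalk.partialSum x j ≤ 0} := by
    ext ω
    simp only [Set.mem_ofPred, Set.mem_preimage, hM]
    rw [Finset.sup'_range_succ_eq_iff (by simp [hS])]
    exact forall₂_congr fun j hj => by rw [hS_steps j hj]
  have hSn (k : ℤ) : {ω | S n ω = k} = steps ⁻¹' {x | LazyWalk.partialSum x n = k} := by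
    ext ω
    simp only [Set.mem_ofPred, Set.mem_preimage, hS_steps n le_rfl]
  rw [hM0, hSn, hSn, hlaw, hlaw, hlaw]
  refine LazyWalk.measure_forall_partialSum_nonpos (fun x y hxy => ?_) ?_
  · rw [LazyWalk.measure_map_steps_singleton hmeas hindep,
      LazyWalk.measure_map_steps_singleton hmeas hindep]
    exact Finset.prod_congr rfl fun i _ =>
      LazyWalk.measure_eq_of_abs_eq_of_lazy_step (hmeas i) hr (hp1 i) (hm1 i) (h0 i) (hxy i)
  · rw [ae_map_iff hsteps.aemeasurable (.of_discrete), ae_all_iff]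
    intro i
    filter_upwards [LazyWalk.ae_mem_of_lazy_step (hmeas i) hr (hp1 i) (hm1 i) (h0 i)] with ω hω
    simp only [Finset.mem_insert, Finset.mem_singleton] at hω
    change X i ω ≤ 1
    omega
end

section
/- Let r ∈ [0, 1/2] and let (X_i)_{i≥1} be i.i.d. random variables with P(X_i = 1) = P(X_i = −1) = r and P(X_i = 0) = 1 − 2r; set S_0 = 0, S_n = X_1 + ⋯ + X_n and M_n = max_{0 ≤ i ≤ n} S_i. Then for every n, P(M_n > 0 and S_n ≤ 0) = P(S_n ≥ 2). -/
/-!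
Let `τ` be the first time the walk visits `1`. The walk cannot jump over `1` upwards, so
`M_n > 0` iff `τ ≤ n`, and `S_n ≥ 2` forces `τ ≤ n`. Flipping the signs of all steps taken after
`τ` leaves `τ` unchanged, is an involution, and replaces `S_n` by `2 - S_n` when `τ ≤ n`; it
therefore exchanges the paths with `M_n > 0, S_n ≤ 0` and those with `S_n ≥ 2`. Since the steps
are independent with symmetric laws, the flip preserves the law of `(X_0, …, X_{n-1})`.
-/

open MeasureTheory ProbabilityTheory

namespace IntWalk

def walk (x : ℕ → ℤ) (k : ℕ) : ℤ := ∑ i ∈ Finset.range k, x i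

@[simp] lemma walk_zero (x : ℕ → ℤ) : walk x 0 = 0 := Finset.sum_range_zero x

lemma walk_succ (x : ℕ → ℤ) (k : ℕ) : walk x (k + 1) = walk x k + x k :=
  Finset.sum_range_succ x k

lemma walk_congr {x y : ℕ → ℤ} {k : ℕ} (h : ∀ i < k, x i = y i) : walk x k = walk y k :=
  Finset.sum_congr rfl fun i hi => h i (Finset.mem_range.1 hi)

def HitsOneBy (x : ℕ → ℤ) (k : ℕ) : Prop := ∃ j ≤ k, walk x j = 1

instance (x : ℕ → ℤ) : DecidablePred (HitsOneBy x) :=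
  fun k => inferInstanceAs (Decidable (∃ j ≤ k, walk x j = 1))

lemma HitsOneBy.mono {x : ℕ → ℤ} {k m : ℕ} (h : HitsOneBy x k) (hkm : k ≤ m) : HitsOneBy x m :=
  let ⟨j, hjk, hj⟩ := h; ⟨j, hjk.trans hkm, hj⟩

lemma hitsOneBy_succ_iff {x : ℕ → ℤ} {k : ℕ} :
    HitsOneBy x (k + 1) ↔ HitsOneBy x k ∨ walk x (k + 1) = 1 := by
  simp only [HitsOneBy, Nat.le_succ_iff_eq_or_le]
  grind

lemma hitsOneBy_of_one_le_walk {x : ℕ → ℤ} (hx : ∀ i, x i ≤ 1) {k : ℕ} (hk : 1 ≤ walk x k) :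
    HitsOneBy x k := by
  induction k with
  | zero => simp at hk
  | succ k ih =>
    by_cases hprev : 1 ≤ walk x k
    · exact (ih hprev).mono k.le_succ
    · have := hx k
      rw [walk_succ] at hk
      exact ⟨k + 1, le_rfl, by rw [walk_succ]; omega⟩

/-- Step `i` is flipped iff it is taken at or after the first visit of the walk to `1`. -/
def reflect (x : ℕ → ℤ) (i : ℕ) : ℤ := if HitsOneBy x i then -x i else x i

lemma walk_reflect (x : ℕ → ℤ) (k : ℕ) :
    walk (reflect x) k = if HitsOneBy x k then 2 - walk x k else walk x k := by
  induction k with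
  | zero => simp [HitsOneBy]
  | succ k ih =>
    rw [walk_succ, ih, reflect]
    simp only [hitsOneBy_succ_iff, walk_succ]
    by_cases h : HitsOneBy x k
    · simp only [h, if_true, true_or]
      ring
    · simp only [h, if_false, false_or]
      split_ifs <;> omega

lemma walk_reflect_eq_one_iff (x : ℕ → ℤ) (k : ℕ) : walk (reflect x) k = 1 ↔ walk x k = 1 := by
  rw [walk_reflect]
  split_ifs <;> omega

lemma hitsOneBy_reflect_iff (x : ℕ → ℤ) (k : ℕ) : HitsOneBy (reflect x) k ↔ HitsOneBy x k := by
  simp only [HitsOneBy, walk_reflect_eq_one_iff]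

lemma reflect_involutive : Function.Involutive reflect := by
  intro x
  funext i
  by_cases h : HitsOneBy x i <;> simp [reflect, hitsOneBy_reflect_iff, h]

lemma reflect_apply_eq_zero {x : ℕ → ℤ} {i : ℕ} (h : x i = 0) : reflect x i = 0 := by
  simp [reflect, h]

theorem exists_pos_walk_and_walk_nonpos_iff {x : ℕ → ℤ} (hx : ∀ i, x i ≤ 1) (n : ℕ) :
    ((∃ k ≤ n, 0 < walk x k) ∧ walk x n ≤ 0) ↔ 2 ≤ walk (reflect x) n := by
  rw [walk_reflect]
  split_ifs with h
  · obtain ⟨j, hjn, hj⟩ := h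
    exact ⟨fun h => by omega, fun h => ⟨⟨j, hjn, by omega⟩, by omega⟩⟩
  · refine iff_of_false ?_ fun h2 => h (hitsOneBy_of_one_le_walk hx (by omega))
    rintro ⟨⟨k, hkn, hk⟩, -⟩
    exact h ((hitsOneBy_of_one_le_walk hx hk).mono hkn)

section Paths

variable {n : ℕ}

def extendByZero (y : Fin n → ℤ) (i : ℕ) : ℤ := if h : i < n then y ⟨i, h⟩ else 0

lemma extendByZero_of_lt (y : Fin n → ℤ) {i : ℕ} (h : i < n) :
    extendByZero y i = y ⟨i, h⟩ := dif_pos h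

def reflectPath (y : Fin n → ℤ) (i : Fin n) : ℤ := reflect (extendByZero y) i

lemma extendByZero_reflectPath (y : Fin n → ℤ) :
    extendByZero (reflectPath y) = reflect (extendByZero y) := by
  funext i
  by_cases h : i < n
  · rw [extendByZero_of_lt _ h, reflectPath]
  · rw [reflect_apply_eq_zero] <;> simp [extendByZero, h]

lemma reflectPath_involutive : Function.Involutive (reflectPath (n := n)) := by
  intro y
  funext i
  rw [reflectPath, extendByZero_reflectPath, reflect_involutive, extendByZero_of_lt _ i.isLt]

lemma reflectPath_apply_eq_or_eq_neg (y : Fin n → ℤ) (i : Fin n) :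
    reflectPath y i = y i ∨ reflectPath y i = -y i := by
  simp only [reflectPath, reflect, extendByZero_of_lt _ i.isLt]
  split_ifs <;> simp

end Paths

end IntWalk

section

variable {ι G : Type*} [Fintype ι] [InvolutiveNeg G] [Countable G] [MeasurableSpace G]
  [MeasurableSingletonClass G]

theorem MeasureTheory.Measure.map_pi_eq_self_of_involutive {ν : ι → Measure G}
    [∀ i, SigmaFinite (ν i)] (hν : ∀ i a, ν i {-a} = ν i {a}) {f : (ι → G) → (ι → G)}
    (hf : Function.Involutive f)
    (hflip : ∀ x i, f x i = x i ∨ f x i = -x i) :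
    (Measure.pi ν).map f = Measure.pi ν := by
  refine Measure.ext_of_singleton fun x => ?_
  have hpre : f ⁻¹' {x} = {f x} := by
    ext y
    exact hf.eq_iff
  rw [Measure.map_apply (measurable_of_countable f) (measurableSet_singleton x), hpre,
    Measure.pi_singleton, Measure.pi_singleton]
  refine Finset.prod_congr rfl fun i _ => ?_
  rcases hflip x i with h | h <;> rw [h]
  exact hν i (x i)

end

namespace IntWalk

variable {Ω : Type*} [MeasurableSpace Ω] {μ : Measure Ω}

theorem map_map_reflectPath_eq [IsProbabilityMeasure μ] {X : ℕ → Ω → ℤ}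
    (hmeas : ∀ i, Measurable (X i)) (hindep : iIndepFun X μ)
    (hsymm : ∀ i a, μ {ω | X i ω = -a} = μ {ω | X i ω = a}) (n : ℕ) :
    (μ.map fun ω (i : Fin n) => X i ω).map reflectPath = μ.map fun ω (i : Fin n) => X i ω := by
  have (i : Fin n) := Measure.isProbabilityMeasure_map (hmeas i).aemeasurable (μ := μ)
  rw [(iIndepFun_iff_map_fun_eq_pi_map fun i : Fin n => (hmeas i).aemeasurable).1
    (hindep.precomp Fin.val_injective)]
  refine Measure.map_pi_eq_self_of_involutive (fun i a => ?_) reflectPath_involutive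
    reflectPath_apply_eq_or_eq_neg
  rw [Measure.map_apply (hmeas i) (measurableSet_singleton _),
    Measure.map_apply (hmeas i) (measurableSet_singleton _)]
  exact hsymm i a

theorem measure_exists_pos_walk_and_walk_nonpos [IsProbabilityMeasure μ] {X : ℕ → Ω → ℤ}
    (hmeas : ∀ i, Measurable (X i)) (hindep : iIndepFun X μ)
    (hsymm : ∀ i a, μ {ω | X i ω = -a} = μ {ω | X i ω = a}) (hle : ∀ i, ∀ᵐ ω ∂μ, X i ω ≤ 1)
    (n : ℕ) :
    μ {ω | (∃ k ≤ n, 0 < walk (X · ω) k) ∧ walk (X · ω) n ≤ 0} =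
      μ {ω | 2 ≤ walk (X · ω) n} := by
  set Y : Ω → Fin n → ℤ := fun ω i => X i ω
  have hY : Measurable Y := measurable_pi_lambda _ fun i => hmeas i
  have hsteps : ∀ᵐ y ∂μ.map Y, ∀ j, extendByZero y j ≤ 1 := by
    rw [ae_map_iff hY.aemeasurable (Set.to_countable _).measurableSet]
    filter_upwards [ae_all_iff.2 hle] with ω hω j
    unfold extendByZero
    split_ifs
    exacts [hω j, zero_le_one]
  have hwalk : ∀ ω, ∀ k ≤ n, walk (X · ω) k = walk (extendByZero (Y ω)) k := fun ω k hk =>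
    walk_congr fun i hi => (extendByZero_of_lt (Y ω) (hi.trans_le hk)).symm
  have hA : {ω | (∃ k ≤ n, 0 < walk (X · ω) k) ∧ walk (X · ω) n ≤ 0} =
      Y ⁻¹' {y | (∃ k ≤ n, 0 < walk (extendByZero y) k) ∧ walk (extendByZero y) n ≤ 0} := by
    ext ω
    simp only [Set.mem_ofPred_eq, Set.mem_preimage, hwalk ω n le_rfl]
    exact and_congr_left' (exists_congr fun k => and_congr_right fun hk => by rw [hwalk ω k hk])
  have hB : {ω | 2 ≤ walk (X · ω) n} = Y ⁻¹' {y | 2 ≤ walk (extendByZero y) n} := by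
    ext ω
    simp only [Set.mem_ofPred_eq, Set.mem_preimage, hwalk ω n le_rfl]
  rw [hA, hB, ← Measure.map_apply hY (Set.to_countable _).measurableSet,
    ← Measure.map_apply hY (Set.to_countable _).measurableSet]
  calc μ.map Y {y | (∃ k ≤ n, 0 < walk (extendByZero y) k) ∧ walk (extendByZero y) n ≤ 0}
      = μ.map Y (reflectPath ⁻¹' {y | 2 ≤ walk (extendByZero y) n}) := by
        refine measure_congr (Filter.eventuallyEq_set.2 ?_)
        filter_upwards [hsteps] with y hy
        simp only [Set.mem_ofPred_eq, Set.mem_preimage, extendByZero_reflectPath]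
        exact exists_pos_walk_and_walk_nonpos_iff hy n
    _ = μ.map Y {y | 2 ≤ walk (extendByZero y) n} := by
        rw [← Measure.map_apply (measurable_of_countable _) (Set.to_countable _).measurableSet,
          map_map_reflectPath_eq hmeas hindep hsymm n]

end IntWalk

section LazyStep

variable {Ω : Type*} [MeasurableSpace Ω] {μ : Measure Ω} [IsProbabilityMeasure μ] {Z : Ω → ℤ}
  {r : ℝ}

lemma ae_mem_of_lazy_law (hZ : Measurable Z) (hr : 0 ≤ r ∧ r ≤ 1 / 2)
    (h1 : μ {ω | Z ω = 1} = ENNReal.ofReal r) (hm1 : μ {ω | Z ω = -1} = ENNReal.ofReal r)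
    (h0 : μ {ω | Z ω = 0} = ENNReal.ofReal (1 - 2 * r)) :
    ∀ᵐ ω ∂μ, Z ω ∈ ({-1, 0, 1} : Finset ℤ) := by
  have hmeas : MeasurableSet (Z ⁻¹' ↑({-1, 0, 1} : Finset ℤ)) :=
    hZ (Set.to_countable _).measurableSet
  refine (ae_mem_iff_measure_eq hmeas.nullMeasurableSet).2 ?_
  rw [measure_univ, ← sum_measure_preimage_singleton _ fun a _ => hZ (measurableSet_singleton a),
    Finset.sum_insert (by decide), Finset.sum_pair (by decide)]
  change μ {ω | Z ω = -1} + (μ {ω | Z ω = 0} + μ {ω | Z ω = 1}) = 1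
  rw [hm1, h0, h1, ← ENNReal.ofReal_add (by linarith) hr.1,
    ← ENNReal.ofReal_add hr.1 (by linarith), show r + (1 - 2 * r + r) = 1 by ring,
    ENNReal.ofReal_one]

lemma measure_neg_eq_of_lazy_law (hZ : Measurable Z) (hr : 0 ≤ r ∧ r ≤ 1 / 2)
    (h1 : μ {ω | Z ω = 1} = ENNReal.ofReal r) (hm1 : μ {ω | Z ω = -1} = ENNReal.ofReal r)
    (h0 : μ {ω | Z ω = 0} = ENNReal.ofReal (1 - 2 * r)) (a : ℤ) :
    μ {ω | Z ω = -a} = μ {ω | Z ω = a} := by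
  by_cases ha : a ∈ ({-1, 0, 1} : Finset ℤ)
  · simp only [Finset.mem_insert, Finset.mem_singleton] at ha
    rcases ha with rfl | rfl | rfl
    · simpa [h1] using hm1.symm
    · simp
    · simpa [h1] using hm1
  · have hnull := ae_iff.1 (ae_mem_of_lazy_law hZ hr h1 hm1 h0)
    have hout : ∀ b ∉ ({-1, 0, 1} : Finset ℤ), μ {ω | Z ω = b} = 0 := fun b hb =>
      measure_mono_null (fun ω (hω : Z ω = b) => by simpa [hω] using hb) hnull
    rw [hout a ha, hout (-a) (by simp at ha ⊢; omega)]

end LazyStep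

/-- For the lazy symmetric random walk `S` with i.i.d. steps taking values
`±1` with probability `r` each and `0` with probability `1 − 2r`, with running
maximum `M_n = max_{0 ≤ i ≤ n} S_i`, one has
`P(M_n > 0 and S_n ≤ 0) = P(S_n ≥ 2)` (the reflection identity). -/
theorem lazy_walk_reflection
    (Ω : Type*) [MeasureSpace Ω] [IsProbabilityMeasure (ℙ : Measure Ω)]
    (r : ℝ) (hr : 0 ≤ r ∧ r ≤ 1 / 2)
    (X : ℕ → Ω → ℤ) (hmeas : ∀ i, Measurable (X i))
    (hindep : iIndepFun X ℙ)
    (hp1 : ∀ i, ℙ {ω | X i ω = 1} = ENNReal.ofReal r)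
    (hm1 : ∀ i, ℙ {ω | X i ω = -1} = ENNReal.ofReal r)
    (h0 : ∀ i, ℙ {ω | X i ω = 0} = ENNReal.ofReal (1 - 2 * r))
    (S : ℕ → Ω → ℤ) (hS : ∀ n ω, S n ω = ∑ i ∈ Finset.range n, X i ω)
    (M : ℕ → Ω → ℤ)
    (hM : ∀ n ω, M n ω = (Finset.range (n + 1)).sup'
      (Finset.nonempty_range_iff.mpr (Nat.succ_ne_zero n)) (fun i => S i ω))
    (n : ℕ) :
    ℙ {ω | 0 < M n ω ∧ S n ω ≤ 0} = ℙ {ω | 2 ≤ S n ω} := by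
  have hwalk : ∀ k ω, S k ω = IntWalk.walk (X · ω) k := hS
  have hsymm i := measure_neg_eq_of_lazy_law (hmeas i) hr (hp1 i) (hm1 i) (h0 i)
  have hle i : ∀ᵐ ω ∂ℙ, X i ω ≤ 1 := by
    filter_upwards [ae_mem_of_lazy_law (hmeas i) hr (hp1 i) (hm1 i) (h0 i)] with ω hω
    simp only [Finset.mem_insert, Finset.mem_singleton] at hω
    omega
  have hmax : ∀ ω, 0 < M n ω ↔ ∃ k ≤ n, 0 < IntWalk.walk (X · ω) k := fun ω => by
    simp only [hM, Finset.lt_sup'_iff, Finset.mem_range, Nat.lt_succ_iff, hwalk]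
  simp only [hmax, hwalk]
  exact IntWalk.measure_exists_pos_walk_and_walk_nonpos hmeas hindep hsymm hle n
end

section
/- Let n ≥ 1 and let x_0 < x_1 < ⋯ < x_n be real numbers. Then the Vandermonde product satisfies Δ_{0,n}(x) = n! · ∫ Δ_{1,n}(y) dy, where the integral is taken over the box {(y_1, …, y_n) : x_{i−1} < y_i < x_i for each 1 ≤ i ≤ n}; explicitly, ∏_{0 ≤ i < j ≤ n}(x_j − x_i) = n! ∫_{x_0}^{x_1} ⋯ ∫_{x_{n−1}}^{x_n} ∏_{1 ≤ i < j ≤ n}(y_j − y_i) dy_n ⋯ dy_1. -/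
/-!
Subtracting from each row of the Vandermonde matrix of `x_0, …, x_n` the row before it leaves
`(1, 0, …, 0)` as first column, so `Δ_{0,n}(x)` is the `n × n` determinant of
`x_{i+1}^{j+1} - x_i^{j+1} = (j + 1) ∫_{x_i}^{x_{i+1}} t^j dt`. Pulling out the factors `j + 1`
gives `n!`, and since the `i`-th row of the remaining matrix only involves the variable `y_i`,
expanding the determinant and applying Fubini to each term turns the determinant of integrals into
the integral of the Vandermonde determinant `Δ_{1,n}(y)` over the box.
-/

open MeasureTheory Finset Matrix

theorem prod_filter_lt_sub_eq_det_vandermonde {R : Type*} [CommRing R] {n : ℕ} (v : Fin n → R) :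
    ∏ p ∈ univ.filter (fun p : Fin n × Fin n => p.1 < p.2), (v p.2 - v p.1) =
      (vandermonde v).det := by
  rw [det_vandermonde, prod_filter, Fintype.prod_prod_type]
  refine prod_congr rfl fun i _ => ?_
  rw [← filter_lt_eq_Ioi, prod_filter]

theorem det_vandermonde_eq_det_pow_succ_sub {R : Type*} [CommRing R] {n : ℕ}
    (x : Fin (n + 1) → R) :
    (vandermonde x).det =
      (of fun i j : Fin n => x i.succ ^ (j + 1 : ℕ) - x i.castSucc ^ (j + 1 : ℕ)).det := by
  rw [det_eq_of_forall_row_eq_smul_add_pred (fun _ => 1) (A := vandermonde x)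
      (B := of fun i j => Fin.cases (x 0 ^ (j : ℕ))
        (fun i => x i.succ ^ (j : ℕ) - x i.castSucc ^ (j : ℕ)) i)
      (fun j => rfl) (fun i j => by simp [vandermonde]),
    det_succ_column_zero, Fin.sum_univ_succ]
  simp [submatrix]

theorem integral_det_pi_eq_det_integral {𝕜 ι E : Type*} [RCLike 𝕜] [Fintype ι] [DecidableEq ι]
    [MeasurableSpace E] {μ : ι → Measure E} [∀ i, SigmaFinite (μ i)] {f : ι → ι → E → 𝕜}
    (hf : ∀ i j, Integrable (f i j) (μ j)) :
    ∫ y, (of fun i j => f i j (y j)).det ∂Measure.pi μ =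
      (of fun i j => ∫ t, f i j t ∂μ j).det := by
  simp only [det_apply', of_apply]
  rw [integral_finsetSum _ fun σ _ => (Integrable.fintype_prod fun i => hf (σ i) i).const_mul _]
  refine sum_congr rfl fun σ _ => ?_
  rw [integral_const_mul, integral_fintype_prod_eq_prod (fun i => f (σ i) i)]

theorem integral_Ioo_pow {a b : ℝ} (h : a ≤ b) (k : ℕ) :
    ∫ t in Set.Ioo a b, t ^ k = (b ^ (k + 1) - a ^ (k + 1)) / (k + 1) := by
  rw [← integral_Ioc_eq_integral_Ioo, ← intervalIntegral.integral_of_le h, integral_pow]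

theorem Fin.prod_univ_cast_add_one_eq_factorial (R : Type*) [CommSemiring R] (n : ℕ) :
    ∏ i : Fin n, ((i : ℕ) + 1 : R) = n.factorial := by
  rw [Fin.prod_univ_eq_prod_range (fun i => (i : R) + 1), ← prod_range_add_one_eq_factorial]
  push_cast
  rfl

theorem vandermonde_integral_general (n : ℕ) (x : Fin (n + 1) → ℝ)
    (hx : StrictMono x) :
    (∏ p ∈ Finset.univ.filter (fun p : Fin (n + 1) × Fin (n + 1) => p.1 < p.2),
        (x p.2 - x p.1)) =
      (Nat.factorial n : ℝ) *
        ∫ y in Set.univ.pi (fun i : Fin n => Set.Ioo (x i.castSucc) (x i.succ)),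
          ∏ p ∈ Finset.univ.filter (fun p : Fin n × Fin n => p.1 < p.2),
            (y p.2 - y p.1) := by
  have hle (i : Fin n) : x i.castSucc ≤ x i.succ := hx.monotone i.castSucc_le_succ
  have hV (y : Fin n → ℝ) : (vandermonde y)ᵀ = of fun i j : Fin n => y j ^ (i : ℕ) := rfl
  rw [prod_filter_lt_sub_eq_det_vandermonde, det_vandermonde_eq_det_pow_succ_sub, ← det_transpose]
  simp_rw [prod_filter_lt_sub_eq_det_vandermonde, ← det_transpose (vandermonde _), hV]
  rw [volume_pi, Measure.restrict_pi_pi,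
    integral_det_pi_eq_det_integral (f := fun (i _ : Fin n) t => t ^ (i : ℕ)), ← Fin.prod_univ_cast_add_one_eq_factorial ℝ, ← det_mul_column]
  · congr with i j
    simp only [of_apply]
    rw [integral_Ioo_pow (hle i), mul_div_cancel₀ _ (by positivity)]
  · exact fun i j => (continuous_pow _).integrableOn_Icc.mono_set Set.Ioo_subset_Icc_self

/-- The Vandermonde integral identity: for `x_0 < x_1 < ⋯ < x_n`,
`∏_{0 ≤ i < j ≤ n} (x_j − x_i)` equals `n!` times the integral of
`∏_{1 ≤ i < j ≤ n} (y_j − y_i)` over the box `{x_{i−1} < y_i < x_i}`. -/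
theorem vandermonde_integral (n : ℕ) (hn : 1 ≤ n) (x : Fin (n + 1) → ℝ)
    (hx : StrictMono x) :
    (∏ p ∈ Finset.univ.filter (fun p : Fin (n + 1) × Fin (n + 1) => p.1 < p.2),
        (x p.2 - x p.1)) =
      (Nat.factorial n : ℝ) *
        ∫ y in Set.univ.pi (fun i : Fin n => Set.Ioo (x i.castSucc) (x i.succ)),
          ∏ p ∈ Finset.univ.filter (fun p : Fin n × Fin n => p.1 < p.2),
            (y p.2 - y p.1) :=
  vandermonde_integral_general n x hx
end
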